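/- arXiv:2507.09821 — 2 statements merged into one kernel-verified Lean document; each statement's English description precedes it below -/
import Mathlib

section
/- Let R be a commutative ring, V a free R-module of finite rank, and c any element of the second exterior power Λ²V. Then for every i ≥ 0, the i-th power of c in the exterior algebra ΛV is divisible by i!, i.e., there exists d ∈ Λ^{2i}V with c^i = i!·d. -/
open ExteriorAlgebra

private lemma ext_comm1 {R : Type*} [CommRing R] {V : Type*} [AddCommGroup V] [Module R V]
    (u : V) {a : ExteriorAlgebra R V} (ha : a ∈ ⋀[R]^2 V) : Commute (ι R u) a := by
  have ha' : a ∈ LinearMap.range (ι R : V →ₗ[R] ExteriorAlgebra R V) *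
      LinearMap.range (ι R : V →ₗ[R] ExteriorAlgebra R V) := by rw [← pow_two]; exact ha
  refine Submodule.mul_induction_on ha' ?_ (fun x y hx hy => hx.add_right hy)
  rintro _ ⟨x, rfl⟩ _ ⟨y, rfl⟩
  have h1 : ι R u * ι R x = -(ι R x * ι R u) :=
    eq_neg_of_add_eq_zero_left (ι_add_mul_swap u x)
  have h2 : ι R u * ι R y = -(ι R y * ι R u) :=
    eq_neg_of_add_eq_zero_left (ι_add_mul_swap u y)
  show ι R u * (ι R x * ι R y) = (ι R x * ι R y) * ι R u
  calc ι R u * (ι R x * ι R y) = (ι R u * ι R x) * ι R y := (mul_assoc _ _ _).symm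
    _ = -(ι R x * (ι R u * ι R y)) := by rw [h1, neg_mul, mul_assoc]
    _ = ι R x * (ι R y * ι R u) := by rw [h2, mul_neg, neg_neg]
    _ = (ι R x * ι R y) * ι R u := (mul_assoc _ _ _).symm

private lemma ext_comm2 {R : Type*} [CommRing R] {V : Type*} [AddCommGroup V] [Module R V]
    {a b : ExteriorAlgebra R V} (ha : a ∈ ⋀[R]^2 V) (hb : b ∈ ⋀[R]^2 V) : Commute a b := by
  have hb' : b ∈ LinearMap.range (ι R : V →ₗ[R] ExteriorAlgebra R V) *
      LinearMap.range (ι R : V →ₗ[R] ExteriorAlgebra R V) := by rw [← pow_two]; exact hb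
  refine Submodule.mul_induction_on hb' ?_ (fun x y hx hy => hx.add_right hy)
  rintro _ ⟨x, rfl⟩ _ ⟨y, rfl⟩
  exact ((ext_comm1 x ha).symm).mul_right ((ext_comm1 y ha).symm)

private lemma ext_key {R : Type*} [CommRing R] {V : Type*} [AddCommGroup V] [Module R V]
    {c : ExteriorAlgebra R V} (hc : c ∈ ⋀[R]^2 V) (i : ℕ) :
    ∃ d ∈ ⋀[R]^(2 * i) V, c ^ i = (i.factorial : ExteriorAlgebra R V) * d := by
  have hc' : c ∈ LinearMap.range (ι R : V →ₗ[R] ExteriorAlgebra R V) *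
      LinearMap.range (ι R : V →ₗ[R] ExteriorAlgebra R V) := by
    rw [← pow_two]; exact hc
  suffices H : c ∈ ⋀[R]^2 V ∧ ∀ i, ∃ d ∈ ⋀[R]^(2 * i) V,
      c ^ i = (i.factorial : ExteriorAlgebra R V) * d from H.2 i
  clear hc i
  refine Submodule.mul_induction_on hc' ?_ ?_
  · rintro _ ⟨x, rfl⟩ _ ⟨y, rfl⟩
    have hmem : ι R x * ι R y ∈ ⋀[R]^2 V := by
      have := Submodule.mul_mem_mul (LinearMap.mem_range_self (ι R : V →ₗ[R] ExteriorAlgebra R V) x)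
        (LinearMap.mem_range_self (ι R : V →ₗ[R] ExteriorAlgebra R V) y)
      rwa [← pow_two] at this
    refine ⟨hmem, fun i => ?_⟩
    match i with
    | 0 =>
      refine ⟨1, ?_, by simp⟩
      simp only [Nat.mul_zero, pow_zero]; exact Submodule.one_le.mp le_rfl
    | 1 =>
      exact ⟨ι R x * ι R y, by simpa using hmem, by simp⟩
    | (k + 2) =>
      have hyx : ι R y * ι R x = -(ι R x * ι R y) :=
        eq_neg_of_add_eq_zero_left (ι_add_mul_swap y x)
      have hsq : (ι R x * ι R y) * (ι R x * ι R y) = 0 := by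
        calc (ι R x * ι R y) * (ι R x * ι R y)
            = ι R x * (ι R y * ι R x) * ι R y := by rw [mul_assoc, mul_assoc, mul_assoc]
          _ = -(ι R x * ι R x * (ι R y * ι R y)) := by
              rw [hyx, mul_neg, neg_mul, mul_assoc, mul_assoc]
              rw [mul_assoc]
          _ = 0 := by rw [ι_sq_zero]; simp
      refine ⟨0, Submodule.zero_mem _, ?_⟩
      rw [pow_add, pow_two, hsq, mul_zero, mul_zero]
  · rintro a b ⟨hamem, ha⟩ ⟨hbmem, hb⟩
    refine ⟨add_mem hamem hbmem, fun i => ?_⟩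
    choose D hD hD2 using ha
    choose E hE hE2 using hb
    have hcom : Commute a b := ext_comm2 hamem hbmem
    refine ⟨∑ k ∈ Finset.range (i + 1), D k * E (i - k), ?_, ?_⟩
    · refine Submodule.sum_mem _ fun k hk => ?_
      have hk' : k ≤ i := Nat.lt_succ_iff.mp (Finset.mem_range.mp hk)
      have hmm := Submodule.mul_mem_mul (hD k) (hE (i - k))
      rw [← pow_add] at hmm
      have h2 : 2 * k + 2 * (i - k) = 2 * i := by omega
      rwa [h2] at hmm
    · rw [hcom.add_pow, Finset.mul_sum]
      refine Finset.sum_congr rfl fun k hk => ?_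
      have hk' : k ≤ i := Nat.lt_succ_iff.mp (Finset.mem_range.mp hk)
      rw [hD2 k, hE2 (i - k), ← Nat.choose_mul_factorial_mul_factorial hk']
      push_cast
      rw [Commute.mul_mul_mul_comm ((Nat.cast_commute ((i - k).factorial) (D k)).symm),
        ← (Nat.cast_commute (i.choose k)
          ((k.factorial : ExteriorAlgebra R V) * ((i - k).factorial : ExteriorAlgebra R V)
            * (D k * E (i - k)))).eq]
      simp only [mul_assoc]

/-- For a free module `V` of finite rank over a commutative ring `R` and any
`c ∈ Λ²V`, the `i`-th power of `c` in the exterior algebra is divisible by `i!`. -/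
theorem exterior_square_pow_divisible {R : Type*} [CommRing R]
    (V : Type*) [AddCommGroup V] [Module R V] [Module.Free R V] [Module.Finite R V]
    (c : ExteriorAlgebra R V) (hc : c ∈ ⋀[R]^2 V) (i : ℕ) :
    ∃ d ∈ ⋀[R]^(2 * i) V, c ^ i = (i.factorial : ExteriorAlgebra R V) * d :=
  ext_key hc i
end

section
/- Let R be a commutative ring, V and W free R-modules of rank g with bases e₁,…,e_g and f₁,…,f_g. In the exterior algebra Λ(V ⊕ W), ∏_{n=1}^{g} (1 + e_n ∧ f_n) = Σ_{I ⊆ {1,…,g}} (−1)^{|I|(|I|−1)/2} · e_I ∧ f_I, where e_I (resp. f_I) is the wedge of the e_n (resp. f_n) with n ∈ I in increasing order. -/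
/-!
The factors `1 + eₙ ∧ fₙ` are taken in increasing order of `n`, so expanding the product
gives, for each `I`, the sorted product `∏_{n ∈ I} (eₙ ∧ fₙ)`. Since the `eᵢ` anticommute with
the `fⱼ`, moving the `e`'s of this product to the front past the `f`'s costs
`0 + 1 + ⋯ + (|I| - 1) = |I|(|I|-1)/2` transpositions.
-/

section Anticommute

variable {A : Type*} [Ring A]

theorem mul_list_prod_of_forall_anticomm (b : A) (l : List A)
    (h : ∀ x ∈ l, b * x = -(x * b)) :
    b * l.prod = ((-1 : ℤ) ^ l.length) • (l.prod * b) := by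
  induction l with
  | nil => simp
  | cons x t ih =>
    rw [List.forall_mem_cons] at h
    rw [List.prod_cons, List.length_cons, ← mul_assoc, h.1, neg_mul, mul_assoc, ih h.2,
      mul_smul_comm, ← neg_smul, pow_succ, mul_neg_one, mul_assoc]

theorem list_prod_map_mul_of_anticomm {α : Type*} (a b : α → A)
    (hab : ∀ i j, b i * a j = -(a j * b i)) (l : List α) :
    (l.map fun n => a n * b n).prod =
      ((-1 : ℤ) ^ l.length.choose 2) • ((l.map a).prod * (l.map b).prod) := by
  induction l with
  | nil => simp
  | cons n t ih =>
    have hb : b n * (t.map a).prod = ((-1 : ℤ) ^ t.length) • ((t.map a).prod * b n) := by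
      rw [mul_list_prod_of_forall_anticomm _ _ (by simp [hab]), List.length_map]
    calc a n * b n * (t.map fun n => a n * b n).prod
        = ((-1 : ℤ) ^ t.length.choose 2) • (a n * (b n * (t.map a).prod) * (t.map b).prod) := by
          rw [ih, mul_smul_comm]; noncomm_ring
      _ = ((-1 : ℤ) ^ (t.length + 1).choose 2) •
            (a n * (t.map a).prod * (b n * (t.map b).prod)) := by
          rw [hb, mul_smul_comm, smul_mul_assoc, smul_smul, ← pow_add, Nat.choose_succ_succ',
            Nat.choose_one_right, add_comm t.length, mul_assoc, mul_assoc, mul_assoc]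

end Anticommute

theorem Finset.list_prod_map_sort_one_add {α A : Type*} [LinearOrder α] [Semiring A]
    (x : α → A) (s : Finset α) :
    ((s.sort (· ≤ ·)).map fun n => 1 + x n).prod =
      ∑ I ∈ s.powerset, ((I.sort (· ≤ ·)).map x).prod := by
  induction s using Finset.induction_on_min with
  | empty => simp
  | insert a s ha ih =>
    have ha_le : ∀ b ∈ s, a ≤ b := fun b hb => (ha b hb).le
    have ha_mem : a ∉ s := fun h => lt_irrefl a (ha a h)
    have hsort : ∀ I ∈ s.powerset,
        (((insert a I).sort (· ≤ ·)).map x).prod = x a * ((I.sort (· ≤ ·)).map x).prod := by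
      intro I hI
      have hIs := Finset.mem_powerset.mp hI
      rw [Finset.sort_insert _ (fun b hb => ha_le b (hIs hb)) (fun h => ha_mem (hIs h)),
        List.map_cons, List.prod_cons]
    rw [Finset.sort_insert _ ha_le ha_mem, List.map_cons, List.prod_cons, ih,
      Finset.sum_powerset_insert ha_mem, Finset.sum_congr rfl hsort, ← Finset.mul_sum,
      add_mul, one_mul]

open ExteriorAlgebra in
/-- `∏ₙ (1 + eₙ ∧ fₙ) = Σ_{I ⊆ {1,…,g}} (−1)^{|I|(|I|−1)/2} · e_I ∧ f_I` in the
exterior algebra of `V ⊕ W`. -/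
theorem prod_one_add_wedge_eq_sum {R : Type*} [CommRing R] {g : ℕ}
    (V W : Type*) [AddCommGroup V] [AddCommGroup W] [Module R V] [Module R W]
    (e : Module.Basis (Fin g) R V) (f : Module.Basis (Fin g) R W) :
    ((List.finRange g).map
        (fun n => 1 + ι R (M := V × W) (e n, 0) * ι R (M := V × W) (0, f n))).prod =
      ∑ I : Finset (Fin g),
        ((-1 : ℤ) ^ (I.card * (I.card - 1) / 2)) •
          (((I.sort (· ≤ ·)).map (fun n => ι R (M := V × W) (e n, 0))).prod *
            ((I.sort (· ≤ ·)).map (fun n => ι R (M := V × W) (0, f n))).prod) := by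
  have hanticomm : ∀ i j, ι R (M := V × W) (0, f i) * ι R (e j, 0) =
      -(ι R (e j, 0) * ι R (0, f i)) :=
    fun i j => eq_neg_of_add_eq_zero_left (ι_add_mul_swap _ _)
  rw [← Fin.sort_univ, Finset.list_prod_map_sort_one_add, Finset.powerset_univ]
  refine Finset.sum_congr rfl fun I _ => ?_
  rw [list_prod_map_mul_of_anticomm _ _ hanticomm, Finset.length_sort, Nat.choose_two_right]
end
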